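/- arXiv:2104.11302 — 6 statements merged into one kernel-verified Lean document; each statement's English description precedes it below -/
import Mathlib

section
/- Let (G,d) be a p-uniformly convex space with constant c > 0, D ⊂ G, T: D → G, and y ∈ Fix T ∩ D. If there exists λ ∈ (0,1) such that d(Tx, y) ≤ d((1−λ)x ⊕ λTx, y) for all x ∈ D, then T is pointwise α-firmly nonexpansive at y on D with constant α = 1/(λ+1). -/
open Set

/-- The transport discrepancy `ψ_T^{(p,c)}(x,y)`. -/
noncomputable def transportDiscrepancy {G : Type*} [MetricSpace G] (p c : ℝ)
    (T : G → G) (x y : G) : ℝ :=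
  c / 2 * (dist (T x) x ^ p + dist (T y) y ^ p + dist (T x) (T y) ^ p
    + dist x y ^ p - dist (T x) y ^ p - dist x (T y) ^ p)

section

variable {G : Type*} [MetricSpace G]

/-- `mix x y t` plays the role of the geodesic point `(1 - t) x ⊕ t y`. -/
def IsPUniformlyConvex (p c : ℝ) (mix : G → G → ℝ → G) : Prop :=
  ∀ t ∈ Icc (0:ℝ) 1, ∀ x y z : G,
    dist z (mix x y t) ^ p ≤ (1 - t) * dist z x ^ p + t * dist z y ^ p
      - c / 2 * t * (1 - t) * dist x y ^ p

theorem IsPUniformlyConvex.rpow_dist_le_of_dist_le_dist_mix {p c : ℝ} {mix : G → G → ℝ → G}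
    (hcvx : IsPUniformlyConvex p c mix) (hp : 0 ≤ p) {t : ℝ} (ht₀ : 0 ≤ t) (ht₁ : t < 1)
    {x w z : G} (h : dist w z ≤ dist (mix x w t) z) :
    dist w z ^ p ≤ dist x z ^ p - t * (c / 2 * dist x w ^ p) := by
  have hmono : dist w z ^ p ≤ dist (mix x w t) z ^ p := Real.rpow_le_rpow dist_nonneg h hp
  have hconv := hcvx t ⟨ht₀, ht₁.le⟩ x w z
  simp only [dist_comm z] at hconv
  -- the term `t * dist w z ^ p` on the right is absorbed, leaving a factor `1 - t > 0`
  have hscaled :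
      (1 - t) * dist w z ^ p ≤ (1 - t) * (dist x z ^ p - t * (c / 2 * dist x w ^ p)) := by
    linear_combination hmono.trans hconv
  exact le_of_mul_le_mul_left hscaled (by linarith)

theorem transportDiscrepancy_of_isFixedPt {p : ℝ} (hp : p ≠ 0) (c : ℝ) {T : G → G} (x : G)
    {y : G} (hy : T y = y) :
    transportDiscrepancy p c T x y = c / 2 * dist (T x) x ^ p := by
  simp only [transportDiscrepancy, hy, dist_self, Real.zero_rpow hp]
  ring

end

theorem pafne_from_RLN_condition_general {G : Type*} [MetricSpace G] (p c : ℝ)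
    (hp : 1 < p)
    (mix : G → G → ℝ → G)
    (hcvx : ∀ t ∈ Icc (0:ℝ) 1, ∀ x y z : G,
      dist z (mix x y t) ^ p ≤ (1 - t) * dist z x ^ p + t * dist z y ^ p
        - c / 2 * t * (1 - t) * dist x y ^ p)
    (D : Set G) (T : G → G) (y : G) (hy : T y = y)
    (lam : ℝ) (hlam : lam ∈ Ioo (0:ℝ) 1)
    (hRLN : ∀ x ∈ D, dist (T x) y ≤ dist (mix x (T x) lam) y) :
    ∀ x ∈ D, dist (T x) (T y) ^ p
      ≤ dist x y ^ p
        - (1 - (1 / (lam + 1))) / (1 / (lam + 1)) * transportDiscrepancy p c T x y := by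
  intro x hx
  have hlam1 : lam + 1 ≠ 0 := by linarith [hlam.1]
  have hcoef : (1 - (1 / (lam + 1))) / (1 / (lam + 1)) = lam := by
    field_simp
    ring
  rw [hcoef, transportDiscrepancy_of_isFixedPt (by linarith) c x hy, hy, dist_comm (T x) x]
  exact IsPUniformlyConvex.rpow_dist_le_of_dist_le_dist_mix hcvx (by linarith) hlam.1.le hlam.2
    (hRLN x hx)

/-- If `y ∈ Fix T ∩ D` and there is `λ ∈ (0,1)` with
`d(Tx,y) ≤ d((1−λ)x ⊕ λTx, y)` for all `x ∈ D`, then `T` is pointwise α-firmly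
nonexpansive at `y` on `D` with constant `α = 1/(λ+1)`. -/
theorem pafne_from_RLN_condition {G : Type*} [MetricSpace G] (p c : ℝ)
    (hp : 1 < p) (hc : 0 < c)
    (mix : G → G → ℝ → G)
    (hmix0 : ∀ x y : G, mix x y 0 = x) (hmix1 : ∀ x y : G, mix x y 1 = y)
    (hcvx : ∀ t ∈ Icc (0:ℝ) 1, ∀ x y z : G,
      dist z (mix x y t) ^ p ≤ (1 - t) * dist z x ^ p + t * dist z y ^ p
        - c / 2 * t * (1 - t) * dist x y ^ p)
    (D : Set G) (T : G → G) (y : G) (hyD : y ∈ D) (hy : T y = y)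
    (lam : ℝ) (hlam : lam ∈ Ioo (0:ℝ) 1)
    (hRLN : ∀ x ∈ D, dist (T x) y ≤ dist (mix x (T x) lam) y) :
    ∀ x ∈ D, dist (T x) (T y) ^ p
      ≤ dist x y ^ p
        - (1 - (1 / (lam + 1))) / (1 / (lam + 1)) * transportDiscrepancy p c T x y :=
  pafne_from_RLN_condition_general p c hp mix hcvx D T y hy lam hlam hRLN
end

section
/- Let (G,d) be a CAT(0) space and T: G → G a mapping such that for every λ ∈ (0,1) and all x,y ∈ G: d(Tx,Ty) ≤ d((1−λ)x ⊕ λTx, (1−λ)y ⊕ λTy). Then d(Tx,Ty)² ≤ Δ_T(x,y) for all x,y ∈ G, where Δ_T(x,y) = (1/2)(d(x,Ty)² + d(y,Tx)² − d(x,Tx)² − d(y,Ty)²); equivalently, T is α-firmly nonexpansive with constant α = 1/2. -/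
open Set
open Filter Topology

/-- In a CAT(0) space, if `d(Tx,Ty) ≤ d((1−λ)x ⊕ λTx, (1−λ)y ⊕ λTy)` for all
`λ ∈ (0,1)` and all `x,y`, then `d(Tx,Ty)² ≤ Δ_T(x,y)` for all `x,y`; equivalently,
`T` is α-firmly nonexpansive with constant `α = 1/2`. -/
theorem fne_implies_half_firm_CAT0 {G : Type*} [MetricSpace G]
    (mix : G → G → ℝ → G)
    (hmix0 : ∀ x y : G, mix x y 0 = x) (hmix1 : ∀ x y : G, mix x y 1 = y)
    (hcvx : ∀ t ∈ Icc (0:ℝ) 1, ∀ x y z : G,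
      dist z (mix x y t) ^ 2 ≤ (1 - t) * dist z x ^ 2 + t * dist z y ^ 2
        - t * (1 - t) * dist x y ^ 2)
    (T : G → G)
    (hfne : ∀ lam ∈ Ioo (0:ℝ) 1, ∀ x y : G,
      dist (T x) (T y) ≤ dist (mix x (T x) lam) (mix y (T y) lam)) :
    ∀ x y : G, dist (T x) (T y) ^ 2
      ≤ 1 / 2 * (dist x (T y) ^ 2 + dist y (T x) ^ 2
          - dist x (T x) ^ 2 - dist y (T y) ^ 2) := by
  intro x y
  set D := dist (T x) (T y) ^ 2 with hD
  set S := dist x (T y) ^ 2 + dist y (T x) ^ 2 - dist x (T x) ^ 2 - dist y (T y) ^ 2 with hS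
  set A := dist x y ^ 2 with hA
  -- key inequality for each λ ∈ (0,1)
  have key : ∀ l ∈ Ioo (0:ℝ) 1, (1 + l) * D ≤ (1 - l) * A + l * S := by
    intro l hl
    obtain ⟨hl0, hl1⟩ := hl
    have hmem : l ∈ Icc (0:ℝ) 1 := ⟨hl0.le, hl1.le⟩
    set v := mix y (T y) l with hv
    have h1 := hcvx l hmem x (T x) v
    have h2 := hcvx l hmem y (T y) x
    have h3 := hcvx l hmem y (T y) (T x)
    rw [← hv] at h2 h3
    have hfq := hfne l ⟨hl0, hl1⟩ x y
    have hsq : D ≤ dist (mix x (T x) l) v ^ 2 := by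
      have := sq_nonneg (dist (mix x (T x) l) v)
      nlinarith [@dist_nonneg G _ (T x) (T y)]
    have hdv : dist v (mix x (T x) l) = dist (mix x (T x) l) v := dist_comm _ _
    rw [hdv] at h1
    have e1 : dist v x = dist x v := dist_comm _ _
    have e2 : dist v (T x) = dist (T x) v := dist_comm _ _
    have e3 : dist x (T y) = dist (T y) x := dist_comm _ _
    have e4 : dist y (T x) = dist (T x) y := dist_comm _ _
    have e5 : dist x y = dist y x := dist_comm _ _
    have e6 : dist (T x) (T y) = dist (T y) (T x) := dist_comm _ _
    simp only [hD, hS, hA, e1, e2, e3, e4, e5, e6] at *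
    nlinarith [sq_nonneg (1 - l), sq_nonneg l, mul_pos hl0 (sub_pos.mpr hl1)]
  -- take the limit λ → 1⁻
  have hne : (𝓝[Ioo (0:ℝ) 1] 1).NeBot := by
    refine mem_closure_iff_nhdsWithin_neBot.mp ?_
    rw [closure_Ioo one_ne_zero.symm]
    exact ⟨by norm_num, le_rfl⟩
  have t1 : Filter.Tendsto (fun l : ℝ => (1 + l) * D) (𝓝[Ioo (0:ℝ) 1] 1) (𝓝 (2 * D)) := by
    have : Filter.Tendsto (fun l : ℝ => (1 + l) * D) (𝓝 1) (𝓝 ((1 + 1) * D)) := by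
      exact (Filter.Tendsto.const_add _ Filter.tendsto_id).mul_const _
    simpa [two_mul, add_mul] using this.mono_left nhdsWithin_le_nhds
  have t2 : Filter.Tendsto (fun l : ℝ => (1 - l) * A + l * S) (𝓝[Ioo (0:ℝ) 1] 1)
      (𝓝 S) := by
    have : Filter.Tendsto (fun l : ℝ => (1 - l) * A + l * S) (𝓝 1)
        (𝓝 ((1 - 1) * A + 1 * S)) := by
      exact (((tendsto_const_nhds (x := (1:ℝ))).sub Filter.tendsto_id).mul_const _).add
        (Filter.tendsto_id.mul_const _)
    simpa using this.mono_left nhdsWithin_le_nhds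
  have hlim : 2 * D ≤ S := by
    refine le_of_tendsto_of_tendsto t1 t2 ?_
    filter_upwards [self_mem_nhdsWithin] with l hl using key l hl
  linarith
end

section
/- Let (G,d) be a p-uniformly convex space with constant c > 0. Let T₁: D → G and T₂: D₁ → G where D₁ = T₁(D), let T̄ = T₂ ∘ T₁, and suppose Fix T̄ ⊂ D and Fix T₁ ∩ Fix T₂ are nonempty. If T₁ is pointwise α-firmly nonexpansive at all y ∈ Fix T̄ with constant α₁ on D and T₂ is pointwise α-firmly nonexpansive at all y ∈ Fix T̄ with constant α₂ on D₁, then T̄ is quasi α-firmly nonexpansive on D with constant ᾱ = (α₁ + α₂ − 2α₁α₂)/((c/2)(1 − α₁ − α₂ + α₁α₂) + α₁ + α₂ − 2α₁α₂). -/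
open Set

/-- Compositions of pointwise α-firmly nonexpansive mappings are quasi α-firmly
nonexpansive with constant
`ᾱ = (α₁+α₂−2α₁α₂)/((c/2)(1−α₁−α₂+α₁α₂)+α₁+α₂−2α₁α₂)`. -/
theorem composition_quasi_afne {G : Type*} [MetricSpace G]
    (p c : ℝ) (hp : 1 < p) (hc : 0 < c)
    (mix : G → G → ℝ → G)
    (hmix0 : ∀ x y : G, mix x y 0 = x) (hmix1 : ∀ x y : G, mix x y 1 = y)
    (hcvx : ∀ t ∈ Icc (0:ℝ) 1, ∀ x y z : G,
      dist z (mix x y t) ^ p ≤ (1 - t) * dist z x ^ p + t * dist z y ^ p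
        - c / 2 * t * (1 - t) * dist x y ^ p)
    (D : Set G) (T₁ T₂ : G → G)
    (α₁ α₂ : ℝ) (hα₁ : α₁ ∈ Ioo (0:ℝ) 1) (hα₂ : α₂ ∈ Ioo (0:ℝ) 1)
    (hfixsub : {x : G | T₂ (T₁ x) = x} ⊆ D)
    (hfixne : ({x : G | T₂ (T₁ x) = x}).Nonempty)
    (hfix12ne : ({x : G | T₁ x = x} ∩ {x : G | T₂ x = x}).Nonempty)
    (h1 : ∀ y, T₂ (T₁ y) = y → ∀ x ∈ D,
      dist (T₁ x) (T₁ y) ^ p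
        ≤ dist x y ^ p - (1 - α₁) / α₁ * transportDiscrepancy p c T₁ x y)
    (h2 : ∀ y, T₂ (T₁ y) = y → ∀ x ∈ T₁ '' D,
      dist (T₂ x) (T₂ (T₁ y)) ^ p
        ≤ dist x (T₁ y) ^ p - (1 - α₂) / α₂ * transportDiscrepancy p c T₂ x (T₁ y)) :
    ∀ y, T₂ (T₁ y) = y → ∀ x ∈ D,
      dist (T₂ (T₁ x)) y ^ p
        ≤ dist x y ^ p
          - (1 - ((α₁ + α₂ - 2 * α₁ * α₂) /
              (c / 2 * (1 - α₁ - α₂ + α₁ * α₂) + α₁ + α₂ - 2 * α₁ * α₂))) /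
            ((α₁ + α₂ - 2 * α₁ * α₂) /
              (c / 2 * (1 - α₁ - α₂ + α₁ * α₂) + α₁ + α₂ - 2 * α₁ * α₂))
            * (c / 2) * dist (T₂ (T₁ x)) x ^ p := by
  obtain ⟨z, hz1, hz2⟩ := hfix12ne
  simp only [mem_setOf_eq] at hz1 hz2
  have hzfix : T₂ (T₁ z) = z := by rw [hz1, hz2]
  have hp0 : p ≠ 0 := by intro h; rw [h] at hp; linarith
  have ha10 := hα₁.1
  have ha11 := hα₁.2
  have ha20 := hα₂.1
  have ha21 := hα₂.2
  have hk₁ : 0 < (1 - α₁) / α₁ := div_pos (by linarith) ha10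
  have hk₂ : 0 < (1 - α₂) / α₂ := div_pos (by linarith) ha20
  have hN : 0 < α₁ + α₂ - 2 * α₁ * α₂ := by nlinarith
  have hN' : α₁ + α₂ - 2 * α₁ * α₂ ≠ 0 := ne_of_gt hN
  have hM : 0 < c / 2 * (1 - α₁ - α₂ + α₁ * α₂) + α₁ + α₂ - 2 * α₁ * α₂ := by
    nlinarith [mul_pos hc (mul_pos (sub_pos.mpr ha11) (sub_pos.mpr ha21))]
  have hM' : c / 2 * (1 - α₁ - α₂ + α₁ * α₂) + α₁ + α₂ - 2 * α₁ * α₂ ≠ 0 := ne_of_gt hM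
  -- every fixed point of the composition is a common fixed point
  have hfixT₁ : ∀ y, T₂ (T₁ y) = y → T₁ y = y := by
    intro y hy
    have hyD : y ∈ D := hfixsub hy
    have e1 : transportDiscrepancy p c T₁ y z = c / 2 * dist (T₁ y) y ^ p := by
      simp only [transportDiscrepancy, hz1, dist_self, Real.zero_rpow hp0]
      ring
    have e2 : transportDiscrepancy p c T₂ (T₁ y) z = c / 2 * dist (T₁ y) y ^ p := by
      simp only [transportDiscrepancy, hz2, hy, dist_self, Real.zero_rpow hp0,
        dist_comm y (T₁ y)]
      ring
    have H1 := h1 z hzfix y hyD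
    rw [hz1, e1] at H1
    have H2 := h2 z hzfix (T₁ y) ⟨y, hyD, rfl⟩
    rw [hz1, hy, hz2, e2] at H2
    have hd : dist (T₁ y) y ^ p ≤ 0 := by
      by_contra h
      push_neg at h
      nlinarith [mul_pos hk₁ (mul_pos (half_pos hc) h), mul_pos hk₂ (mul_pos (half_pos hc) h)]
    have h0 : 0 ≤ dist (T₁ y) y ^ p := Real.rpow_nonneg dist_nonneg p
    have hdz : dist (T₁ y) y = 0 :=
      (Real.rpow_eq_zero dist_nonneg hp0).mp (le_antisymm hd h0)
    exact dist_eq_zero.mp hdz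
  intro y hy x hxD
  have hT1y : T₁ y = y := hfixT₁ y hy
  have hT2y : T₂ y = y := by nth_rewrite 1 [← hT1y]; exact hy
  have e1 : transportDiscrepancy p c T₁ x y = c / 2 * dist (T₁ x) x ^ p := by
    simp only [transportDiscrepancy, hT1y, dist_self, Real.zero_rpow hp0]
    ring
  have e2 : transportDiscrepancy p c T₂ (T₁ x) y =
      c / 2 * dist (T₂ (T₁ x)) (T₁ x) ^ p := by
    simp only [transportDiscrepancy, hT2y, dist_self, Real.zero_rpow hp0]
    ring
  have H1 := h1 y hy x hxD
  rw [hT1y, e1] at H1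
  have H2 := h2 y hy (T₁ x) ⟨x, hxD, rfl⟩
  rw [hT1y, hT2y, e2] at H2
  -- convexity inequality along the geodesic from x to T₂ (T₁ x)
  have ht0 : (0:ℝ) ≤ α₁ * (1 - α₂) / (α₁ + α₂ - 2 * α₁ * α₂) :=
    div_nonneg (by nlinarith) hN.le
  have ht1 : α₁ * (1 - α₂) / (α₁ + α₂ - 2 * α₁ * α₂) ≤ 1 := by
    rw [div_le_one hN]; nlinarith
  have hcv := hcvx (α₁ * (1 - α₂) / (α₁ + α₂ - 2 * α₁ * α₂)) ⟨ht0, ht1⟩ x (T₂ (T₁ x)) (T₁ x)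
  rw [dist_comm (T₁ x) (T₂ (T₁ x)), dist_comm x (T₂ (T₁ x))] at hcv
  have hnn : 0 ≤ dist (T₁ x)
      (mix x (T₂ (T₁ x)) (α₁ * (1 - α₂) / (α₁ + α₂ - 2 * α₁ * α₂))) ^ p :=
    Real.rpow_nonneg dist_nonneg p
  set A := dist (T₁ x) x ^ p with hA
  set B := dist (T₂ (T₁ x)) (T₁ x) ^ p with hB
  set Dp := dist (T₂ (T₁ x)) x ^ p with hDp
  have key : c / 2 * (α₁ * (1 - α₂) / (α₁ + α₂ - 2 * α₁ * α₂))
        * (1 - α₁ * (1 - α₂) / (α₁ + α₂ - 2 * α₁ * α₂)) * Dp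
      ≤ (1 - α₁ * (1 - α₂) / (α₁ + α₂ - 2 * α₁ * α₂)) * A
        + (α₁ * (1 - α₂) / (α₁ + α₂ - 2 * α₁ * α₂)) * B := by linarith
  have hfac : (0:ℝ) < c / 2 * (α₁ + α₂ - 2 * α₁ * α₂) / (α₁ * α₂) := by
    have := mul_pos (half_pos hc) hN
    exact div_pos this (mul_pos ha10 ha20)
  have hmul := mul_le_mul_of_nonneg_left key hfac.le
  have eL : c / 2 * (α₁ + α₂ - 2 * α₁ * α₂) / (α₁ * α₂) *
        (c / 2 * (α₁ * (1 - α₂) / (α₁ + α₂ - 2 * α₁ * α₂))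
          * (1 - α₁ * (1 - α₂) / (α₁ + α₂ - 2 * α₁ * α₂)) * Dp)
      = c / 2 * c / 2 * ((1 - α₁) * (1 - α₂)) / (α₁ + α₂ - 2 * α₁ * α₂) * Dp := by
    field_simp
    ring
  have eR : c / 2 * (α₁ + α₂ - 2 * α₁ * α₂) / (α₁ * α₂) *
        ((1 - α₁ * (1 - α₂) / (α₁ + α₂ - 2 * α₁ * α₂)) * A
          + (α₁ * (1 - α₂) / (α₁ + α₂ - 2 * α₁ * α₂)) * B)
      = c / 2 * ((1 - α₁) / α₁ * A) + c / 2 * ((1 - α₂) / α₂ * B) := by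
    field_simp
    ring
  rw [eL, eR] at hmul
  have hC : (1 - ((α₁ + α₂ - 2 * α₁ * α₂) /
        (c / 2 * (1 - α₁ - α₂ + α₁ * α₂) + α₁ + α₂ - 2 * α₁ * α₂))) /
      ((α₁ + α₂ - 2 * α₁ * α₂) /
        (c / 2 * (1 - α₁ - α₂ + α₁ * α₂) + α₁ + α₂ - 2 * α₁ * α₂)) * (c / 2)
      = c / 2 * c / 2 * ((1 - α₁) * (1 - α₂)) / (α₁ + α₂ - 2 * α₁ * α₂) := by
    rw [one_sub_div hM', div_div_div_cancel_right₀ hM']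
    rw [div_mul_eq_mul_div, div_eq_div_iff hN' hN']
    ring
  rw [hC]
  linarith [H1, H2, hmul]
end

section
/- Let (G,d) be a complete p-uniformly convex space with constant c > 0. For any points x₁,…,xₙ ∈ G and weights ω₁,…,ωₙ ∈ [0,1] summing to 1, the function y ↦ Σᵢ ωᵢ d(y,xᵢ)^p attains a unique minimizer in G (the p-barycenter exists and is unique). -/
open Set Finset Filter Topology

/-! The p-uniform convexity inequality at `t = 1/2` makes the objective `F` *uniformly midpoint
convex*: `F (m(y,z)) ≤ (F y + F z)/2 - (c/8) d(y,z)^p`. Since `F (m(y,z)) ≥ inf F`, two points whose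
values are within `ε` of `inf F` are at distance `≤ (8ε/c)^{1/p}`; so a minimizing sequence is
Cauchy, its limit is a minimizer by continuity, and two minimizers are at distance `0`. -/

def UniformlyMidconvex {X : Type*} [PseudoMetricSpace X] (mid : X → X → X) (κ p : ℝ)
    (f : X → ℝ) : Prop :=
  ∀ y z, f (mid y z) ≤ (f y + f z) / 2 - κ * dist y z ^ p

namespace UniformlyMidconvex

variable {X : Type*} {mid : X → X → X} {κ p : ℝ}

theorem weighted_sum [PseudoMetricSpace X] {ι : Type*} [Fintype ι] {g : ι → X → ℝ} {ω : ι → ℝ}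
    (hg : ∀ i, UniformlyMidconvex mid κ p (g i)) (hω : ∀ i, 0 ≤ ω i) :
    UniformlyMidconvex mid (κ * ∑ i, ω i) p (fun y => ∑ i, ω i * g i y) := by
  intro y z
  calc ∑ i, ω i * g i (mid y z)
      ≤ ∑ i, ω i * ((g i y + g i z) / 2 - κ * dist y z ^ p) :=
        sum_le_sum fun i _ => mul_le_mul_of_nonneg_left (hg i y z) (hω i)
    _ = ((∑ i, ω i * g i y) + ∑ i, ω i * g i z) / 2 - κ * (∑ i, ω i) * dist y z ^ p := by
        simp only [mul_sub, mul_add, mul_div_assoc', sum_sub_distrib, ← sum_div,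
          sum_add_distrib]
        rw [← sum_mul]
        ring

section Minimizers

variable [PseudoMetricSpace X] {f : X → ℝ} {m ε : ℝ}

theorem dist_rpow_le (hf : UniformlyMidconvex mid κ p f) (hm : ∀ z, m ≤ f z) {y z : X}
    (hy : f y ≤ m + ε) (hz : f z ≤ m + ε) : κ * dist y z ^ p ≤ ε := by
  linarith [hf y z, hm (mid y z)]

theorem cauchySeq_of_tendsto (hf : UniformlyMidconvex mid κ p f) (hκ : 0 < κ) (hp : 0 < p)
    (hm : ∀ z, m ≤ f z) {u : ℕ → X} (hu : Tendsto (f ∘ u) atTop (𝓝 m)) : CauchySeq u := by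
  refine Metric.cauchySeq_iff.2 fun ε hε => ?_
  have hη : m < m + κ * (ε / 2) ^ p := lt_add_of_pos_right m (by positivity)
  obtain ⟨N, hN⟩ := eventually_atTop.1 (hu.eventually (eventually_lt_nhds hη))
  refine ⟨N, fun k hk l hl => ?_⟩
  have h := hf.dist_rpow_le hm (hN k hk).le (hN l hl).le
  have hd : dist (u k) (u l) ≤ ε / 2 := by
    rwa [mul_le_mul_iff_right₀ hκ, Real.rpow_le_rpow_iff dist_nonneg (by positivity) hp] at h
  linarith

end Minimizers

theorem existsUnique_forall_le [MetricSpace X] [CompleteSpace X] [Nonempty X] {f : X → ℝ}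
    (hf : UniformlyMidconvex mid κ p f) (hκ : 0 < κ) (hp : 0 < p)
    (hlsc : LowerSemicontinuous f) (hbdd : BddBelow (range f)) :
    ∃! y, ∀ z, f y ≤ f z := by
  set m := sInf (range f)
  have hm : ∀ z, m ≤ f z := fun z => csInf_le hbdd ⟨z, rfl⟩
  obtain ⟨v, -, hv, hvf⟩ := exists_seq_tendsto_sInf (range_nonempty f) hbdd
  choose u hu using hvf
  have hfu : Tendsto (f ∘ u) atTop (𝓝 m) := by
    simpa only [Function.comp_def, hu] using hv
  obtain ⟨y, hy⟩ := cauchySeq_tendsto_of_complete (hf.cauchySeq_of_tendsto hκ hp hm hfu)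
  have hfy : f y ≤ m := le_of_not_gt fun hlt => by
    obtain ⟨t, hmt, htf⟩ := exists_between hlt
    obtain ⟨k, hk₁, hk₂⟩ :=
      ((hy.eventually (hlsc y t htf)).and (hfu.eventually (eventually_lt_nhds hmt))).exists
    exact hk₁.not_gt hk₂
  refine ⟨y, fun z => hfy.trans (hm z), fun z hz => ?_⟩
  have h := hf.dist_rpow_le (ε := 0) hm ((hz y).trans (by linarith)) (by linarith)
  have hd : dist z y ^ p = 0 :=
    le_antisymm (nonpos_of_mul_nonpos_right h hκ) (Real.rpow_nonneg dist_nonneg p)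
  exact dist_eq_zero.1 ((Real.rpow_eq_zero dist_nonneg hp.ne').1 hd)

end UniformlyMidconvex

theorem uniformlyMidconvex_dist_rpow {G : Type*} [MetricSpace G] {p c : ℝ}
    {mix : G → G → ℝ → G}
    (hcvx : ∀ t ∈ Icc (0:ℝ) 1, ∀ x y z : G,
      dist z (mix x y t) ^ p ≤ (1 - t) * dist z x ^ p + t * dist z y ^ p
        - c / 2 * t * (1 - t) * dist x y ^ p) (a : G) :
    UniformlyMidconvex (fun y z => mix y z (1 / 2)) (c / 8) p (fun y => dist y a ^ p) := by
  intro y z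
  simp only [dist_comm _ a]
  linarith [hcvx (1 / 2) (by norm_num) y z a]

theorem p_barycenter_exists_unique_general {G : Type*} [MetricSpace G] [CompleteSpace G]
    (p c : ℝ) (hp : 1 < p) (hc : 0 < c)
    (mix : G → G → ℝ → G)
    (hcvx : ∀ t ∈ Icc (0:ℝ) 1, ∀ x y z : G,
      dist z (mix x y t) ^ p ≤ (1 - t) * dist z x ^ p + t * dist z y ^ p
        - c / 2 * t * (1 - t) * dist x y ^ p)
    (n : ℕ) (x : Fin n → G) (ω : Fin n → ℝ)
    (hω : ∀ i, ω i ∈ Icc (0:ℝ) 1) (hsum : ∑ i, ω i = 1) :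
    ∃! y : G, ∀ z : G,
      ∑ i, ω i * dist y (x i) ^ p ≤ ∑ i, ω i * dist z (x i) ^ p := by
  have hp₀ : 0 < p := one_pos.trans hp
  have : Nonempty G := by
    rcases n with _ | n
    · simp at hsum
    · exact ⟨x 0⟩
  have hF := UniformlyMidconvex.weighted_sum (fun i => uniformlyMidconvex_dist_rpow hcvx (x i))
    fun i => (hω i).1
  rw [hsum, mul_one] at hF
  refine hF.existsUnique_forall_le (by positivity) hp₀ (Continuous.lowerSemicontinuous ?_)
    ⟨0, forall_mem_range.2 fun y => sum_nonneg fun i _ =>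
      mul_nonneg (hω i).1 (Real.rpow_nonneg dist_nonneg p)⟩
  exact continuous_finsetSum _ fun i _ => continuous_const.mul
    ((continuous_id.dist continuous_const).rpow_const fun _ => Or.inr hp₀.le)

/-- In a complete p-uniformly convex space, the p-barycenter of finitely many points
with weights in `[0,1]` summing to `1` exists and is unique. -/
theorem p_barycenter_exists_unique {G : Type*} [MetricSpace G] [CompleteSpace G]
    (p c : ℝ) (hp : 1 < p) (hc : 0 < c)
    (mix : G → G → ℝ → G)
    (hmix0 : ∀ x y : G, mix x y 0 = x) (hmix1 : ∀ x y : G, mix x y 1 = y)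
    (hcvx : ∀ t ∈ Icc (0:ℝ) 1, ∀ x y z : G,
      dist z (mix x y t) ^ p ≤ (1 - t) * dist z x ^ p + t * dist z y ^ p
        - c / 2 * t * (1 - t) * dist x y ^ p)
    (n : ℕ) (x : Fin n → G) (ω : Fin n → ℝ)
    (hω : ∀ i, ω i ∈ Icc (0:ℝ) 1) (hsum : ∑ i, ω i = 1) :
    ∃! y : G, ∀ z : G,
      ∑ i, ω i * dist y (x i) ^ p ≤ ∑ i, ω i * dist z (x i) ^ p :=
  p_barycenter_exists_unique_general p c hp hc mix hcvx n x ω hω hsum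
end

section
/- Let (G,d) be a p-uniformly convex space with constant c > 0 and T: G → G pointwise nonexpansive at all y ∈ Fix T. For λ ∈ (0,1), define the Krasnoselsky–Mann relaxation T_λ := λT ⊕ (1−λ)Id (i.e., T_λ x = (1−λ)x ⊕ λTx). Then Fix T_λ = Fix T and T_λ is pointwise α-firmly nonexpansive at every y ∈ Fix T with constant α = λ^{p−1}/(1 − λ + λ^{p−1}); explicitly, d(y, T_λ x)^p ≤ d(x,y)^p − (c/2)·((1−λ)/λ^{p−1})·d(x, T_λ x)^p for all x ∈ G. -/
open Set

/-- Krasnoselsky–Mann relaxations: if `T` is pointwise nonexpansive at all of its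
fixed points, then `T_λ x = (1−λ)x ⊕ λTx` has the same fixed points as `T` and is
pointwise α-firmly nonexpansive at every `y ∈ Fix T` with
constant `α = λ^{p−1}/(1−λ+λ^{p−1})`. -/
theorem km_relaxation_pointwise_afne {G : Type*} [MetricSpace G]
    (p c : ℝ) (hp : 1 < p) (hc : 0 < c)
    (mix : G → G → ℝ → G)
    (hmix0 : ∀ x y : G, mix x y 0 = x) (hmix1 : ∀ x y : G, mix x y 1 = y)
    (hd1 : ∀ (x y : G), ∀ t ∈ Icc (0:ℝ) 1, dist x (mix x y t) = t * dist x y)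
    (hd2 : ∀ (x y : G), ∀ t ∈ Icc (0:ℝ) 1, dist (mix x y t) y = (1 - t) * dist x y)
    (hcvx : ∀ t ∈ Icc (0:ℝ) 1, ∀ x y z : G,
      dist z (mix x y t) ^ p ≤ (1 - t) * dist z x ^ p + t * dist z y ^ p
        - c / 2 * t * (1 - t) * dist x y ^ p)
    (T : G → G)
    (hne : ∀ y : G, T y = y → ∀ x : G, dist (T x) y ≤ dist x y)
    (lam : ℝ) (hlam : lam ∈ Ioo (0:ℝ) 1) :
    ({x : G | mix x (T x) lam = x} = {x : G | T x = x})
    ∧ ∀ y : G, T y = y → ∀ x : G,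
        dist y (mix x (T x) lam) ^ p
          ≤ dist x y ^ p
            - c / 2 * ((1 - lam) / lam ^ (p - 1)) * dist x (mix x (T x) lam) ^ p := by
  obtain ⟨hl0, hl1⟩ := hlam
  have hmem : lam ∈ Icc (0:ℝ) 1 := ⟨hl0.le, hl1.le⟩
  constructor
  · ext x
    simp only [mem_setOf_eq]
    constructor
    · intro h
      have h1 := hd1 x (T x) lam hmem
      rw [h] at h1
      have h2 : dist x (T x) = 0 := by
        have := dist_self x
        nlinarith [(dist_nonneg : (0:ℝ) ≤ dist x (T x))]
      exact (dist_eq_zero.mp h2).symm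
    · intro h
      have h1 := hd1 x (T x) lam hmem
      rw [h] at h1
      simp only [dist_self, mul_zero] at h1
      rw [h]
      exact (dist_eq_zero.mp h1).symm
  · intro y hy x
    have hT : dist (T x) y ≤ dist x y := hne y hy x
    have hcv := hcvx lam hmem x (T x) y
    have hdx : dist x (mix x (T x) lam) = lam * dist x (T x) := hd1 x (T x) lam hmem
    have hppos : (0:ℝ) < p := by linarith
    have hTp : dist y (T x) ^ p ≤ dist x y ^ p := by
      rw [dist_comm y (T x)]
      exact Real.rpow_le_rpow dist_nonneg hT hppos.le
    have key : c / 2 * ((1 - lam) / lam ^ (p - 1)) * (lam * dist x (T x)) ^ p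
        = c / 2 * lam * (1 - lam) * dist x (T x) ^ p := by
      rw [Real.mul_rpow hl0.le dist_nonneg]
      have hlampow : lam ^ p = lam ^ (p - 1) * lam := by
        rw [← Real.rpow_add_one hl0.ne' (p - 1)]
        ring_nf
      have hne' : lam ^ (p - 1) ≠ 0 := by positivity
      rw [hlampow]
      field_simp
    rw [hdx, key]
    have hyx : dist y x = dist x y := dist_comm y x
    rw [hyx] at hcv
    nlinarith [hcv, hTp, Real.rpow_nonneg (dist_nonneg : (0:ℝ) ≤ dist x y) p,
      Real.rpow_nonneg (dist_nonneg : (0:ℝ) ≤ dist y (T x)) p]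
end

section
/- Let (G,d) be a p-uniformly convex metric space with constant c, T: D → D with D ⊆ G, and S := Fix T ∩ D nonempty. Suppose every sequence x_{k+1} = Tx_k initialized in D is gauge monotone relative to S with rate θ (θ(0)=0, 0 < θ(t) < t for t > 0, Σ θ^{(j)}(t) < ∞), and that (Id − θ)^{−1} is continuous, strictly increasing on ℝ₊ with (Id−θ)^{−1}(0) = 0. Then the residual mapping x ↦ d(Tx, x) is metrically subregular for 0 relative to D on D with gauge ρ = (Id − θ)^{−1}: d(x, S) ≤ (Id−θ)^{−1}(d(Tx,x)) for all x ∈ D. -/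
open Set Metric

/-- Necessity of metric subregularity: if every fixed point iteration of `T`
initialized in `D` is gauge monotone relative to `S = Fix T ∩ D` with rate `θ`, and
`ρ = (Id − θ)⁻¹` is continuous, strictly increasing with `ρ(0) = 0`, then the
residual `x ↦ d(Tx,x)` is metrically subregular for `0` on `D` with gauge `ρ`:
`d(x, S) ≤ ρ(d(Tx,x))` for all `x ∈ D`. -/
theorem metric_subregularity_necessary {G : Type*} [MetricSpace G]
    (p c : ℝ) (hp : 1 < p) (hc : 0 < c)
    (D : Set G) (T : G → G) (hTD : MapsTo T D D)
    (hSne : ({z : G | T z = z} ∩ D).Nonempty)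
    (θ : ℝ → ℝ) (hθ0 : θ 0 = 0)
    (hθ : ∀ t : ℝ, 0 < t → 0 < θ t ∧ θ t < t)
    (hθsum : ∀ t : ℝ, 0 ≤ t → Summable (fun j : ℕ => θ^[j] t))
    (hmono : ∀ x : ℕ → G, x 0 ∈ D → (∀ k, x (k + 1) = T (x k)) →
      ∀ k, infDist (x (k + 1)) ({z : G | T z = z} ∩ D)
        ≤ θ (infDist (x k) ({z : G | T z = z} ∩ D)))
    (ρ : ℝ → ℝ) (hρ0 : ρ 0 = 0)
    (hρcont : ContinuousOn ρ (Ici 0)) (hρmono : StrictMonoOn ρ (Ici 0))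
    (hρinv : ∀ t : ℝ, 0 ≤ t → ρ (t - θ t) = t) :
    ∀ x ∈ D, infDist x ({z : G | T z = z} ∩ D) ≤ ρ (dist (T x) x) := by
  intro x hx
  set S := ({z : G | T z = z} ∩ D) with hS
  set t := infDist x S with ht
  have ht0 : 0 ≤ t := infDist_nonneg
  -- the iteration sequence
  have hkey : infDist (T x) S ≤ θ t := by
    have := hmono (fun k => T^[k] x) (by simpa using hx)
      (fun k => Function.iterate_succ_apply' T k x) 0
    simpa using this
  -- triangle inequality: t ≤ d(x, Tx) + infDist (Tx) S
  have htri : t ≤ dist (T x) x + θ t := by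
    calc t ≤ infDist (T x) S + dist x (T x) := infDist_le_infDist_add_dist
    _ ≤ dist (T x) x + θ t := by rw [dist_comm]; linarith
  have hθt : θ t ≤ t := by
    rcases eq_or_lt_of_le ht0 with h | h
    · simp [← h, hθ0]
    · exact (hθ t h).2.le
  have h1 : t - θ t ≤ dist (T x) x := by linarith
  calc t = ρ (t - θ t) := (hρinv t ht0).symm
  _ ≤ ρ (dist (T x) x) := hρmono.monotoneOn (by simp; linarith)
      (mem_Ici.mpr dist_nonneg) h1
end
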